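/- arXiv:2303.14013 — 4 statements merged into one kernel-verified Lean document; each statement's English description precedes it below -/
import Mathlib

section
/- Let S ∈ ℂ[x] be a monic squarefree polynomial of odd degree 2g+1 with g ≥ 1, let κ ∈ ℂ with κ ≠ 0 and κ ≠ 1, and let F, G ∈ ℂ(x) with F nonconstant satisfy S·G² = F·(F−1)·(F−κ). Then the rational function F′/G (where F′ is the derivative of F) is a polynomial, and its degree is at most g−1. -/
open Polynomial

/-- The formal derivative of a rational function, computed from its reduced
numerator/denominator representation by the quotient rule. -/
noncomputable def RatFunc.deriv' (F : RatFunc ℂ) : RatFunc ℂ :=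
  RatFunc.mk (Polynomial.derivative F.num * F.denom - F.num * Polynomial.derivative F.denom)
    (F.denom ^ 2)

/-!
Write `v` for the order of a rational function at a point of `ℙ¹`. Since `F`, `F - 1` and
`F - κ` differ pairwise by nonzero constants, at every point either all three have the same
negative order, or all three orders are `≥ 0` and at most one is positive. Taking orders in
`S G² = F (F - 1) (F - κ)` then pins down `v G` in terms of `v F` and `v S`, where `v S ≤ 1` at
finite points because `S` is squarefree and `v S = -(2g+1)` at `∞`. Differentiation lowers the
order at a finite point by at most one and preserves holomorphy there, so `F' / G` has no finite
poles and is a polynomial; at `∞` it raises the order by at least one, which bounds the degree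
of `F' / G` by `g - 1`.
-/

namespace Polynomial

theorem rootMultiplicity_add_rootMultiplicity_le_wronskian {R : Type*} [CommRing R]
    {a b : R[X]} (t : R) (hw : wronskian a b ≠ 0) :
    a.rootMultiplicity t + b.rootMultiplicity t ≤ (wronskian a b).rootMultiplicity t + 1 := by
  set m := a.rootMultiplicity t
  set n := b.rootMultiplicity t
  suffices (X - C t) ^ (m + n - 1) ∣ wronskian a b by
    have := (le_rootMultiplicity_iff hw).mpr this
    omega
  have ha := a.pow_rootMultiplicity_dvd t
  have hb := b.pow_rootMultiplicity_dvd t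
  have h₁ : (X - C t) ^ (m + n - 1) ∣ a * derivative b := by
    refine (pow_dvd_pow _ (by omega : m + n - 1 ≤ m + (n - 1))).trans ?_
    rw [pow_add]
    exact mul_dvd_mul ha (pow_sub_one_dvd_derivative_of_pow_dvd hb)
  have h₂ : (X - C t) ^ (m + n - 1) ∣ derivative a * b := by
    refine (pow_dvd_pow _ (by omega : m + n - 1 ≤ (m - 1) + n)).trans ?_
    rw [pow_add]
    exact mul_dvd_mul (pow_sub_one_dvd_derivative_of_pow_dvd ha) hb
  exact dvd_sub h₁ h₂

end Polynomial

namespace RatFunc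

variable {K : Type*} [Field K]

noncomputable def orderAt (α : K) (f : RatFunc K) : ℤ :=
  f.num.rootMultiplicity α - f.denom.rootMultiplicity α

theorem rootMultiplicity_num_eq_zero_or_rootMultiplicity_denom_eq_zero (f : RatFunc K) (α : K) :
    f.num.rootMultiplicity α = 0 ∨ f.denom.rootMultiplicity α = 0 := by
  by_contra! h
  have hn : f.num.IsRoot α := (rootMultiplicity_pos'.mp (Nat.pos_of_ne_zero h.1)).2
  have hd : f.denom.IsRoot α := (rootMultiplicity_pos'.mp (Nat.pos_of_ne_zero h.2)).2
  have := f.isCoprime_num_denom.map (evalRingHom α)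
  simp [hn.eq_zero, hd.eq_zero] at this

theorem orderAt_eq_of_eq_div (α : K) {f : RatFunc K} {p q : K[X]} (hp : p ≠ 0) (hq : q ≠ 0)
    (h : f = algebraMap K[X] (RatFunc K) p / algebraMap K[X] (RatFunc K) q) :
    orderAt α f = p.rootMultiplicity α - q.rootMultiplicity α := by
  have key := (num_mul_eq_mul_denom_iff hq).mpr h
  have hnum : f.num ≠ 0 := by
    rintro h0
    rw [h0, zero_mul] at key
    exact mul_ne_zero hp f.denom_ne_zero key.symm
  have := congrArg (rootMultiplicity α) key
  rw [rootMultiplicity_mul (mul_ne_zero hnum hq),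
    rootMultiplicity_mul (mul_ne_zero hp f.denom_ne_zero)] at this
  unfold orderAt
  omega

@[simp]
theorem orderAt_algebraMap (α : K) (p : K[X]) :
    orderAt α (algebraMap K[X] (RatFunc K) p) = p.rootMultiplicity α := by
  rw [orderAt, num_algebraMap, denom_algebraMap, ← Polynomial.C_1, rootMultiplicity_C,
    Nat.cast_zero, sub_zero]

@[simp]
theorem orderAt_C (α c : K) : orderAt α (C c) = 0 := by
  rw [orderAt, num_C, denom_C, ← Polynomial.C_1, rootMultiplicity_C, rootMultiplicity_C,
    sub_self]

theorem orderAt_mul (α : K) {f g : RatFunc K} (hf : f ≠ 0) (hg : g ≠ 0) :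
    orderAt α (f * g) = orderAt α f + orderAt α g := by
  have hrep : f * g = algebraMap K[X] (RatFunc K) (f.num * g.num) /
      algebraMap K[X] (RatFunc K) (f.denom * g.denom) := by
    rw [map_mul, map_mul, mul_div_mul_comm, num_div_denom, num_div_denom]
  rw [orderAt_eq_of_eq_div α (mul_ne_zero (num_ne_zero hf) (num_ne_zero hg))
      (mul_ne_zero f.denom_ne_zero g.denom_ne_zero) hrep,
    rootMultiplicity_mul (mul_ne_zero (num_ne_zero hf) (num_ne_zero hg)),
    rootMultiplicity_mul (mul_ne_zero f.denom_ne_zero g.denom_ne_zero)]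
  unfold orderAt
  omega

theorem min_orderAt_le_orderAt_add (α : K) {f g : RatFunc K} (hf : f ≠ 0) (hg : g ≠ 0)
    (hfg : f + g ≠ 0) : min (orderAt α f) (orderAt α g) ≤ orderAt α (f + g) := by
  have hrep : f + g = algebraMap K[X] (RatFunc K) (f.num * g.denom + f.denom * g.num) /
      algebraMap K[X] (RatFunc K) (f.denom * g.denom) := by
    rw [map_add, map_mul, map_mul, map_mul, add_div, mul_div_mul_comm, mul_div_mul_comm,
      num_div_denom, num_div_denom, div_self (algebraMap_ne_zero f.denom_ne_zero),
      div_self (algebraMap_ne_zero g.denom_ne_zero), mul_one, one_mul]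
  have hnum : f.num * g.denom + f.denom * g.num ≠ 0 := by
    rintro h0
    rw [h0, map_zero, zero_div] at hrep
    exact hfg hrep
  have hmin := rootMultiplicity_add α hnum
  rw [rootMultiplicity_mul (mul_ne_zero (num_ne_zero hf) g.denom_ne_zero),
    rootMultiplicity_mul (mul_ne_zero f.denom_ne_zero (num_ne_zero hg))] at hmin
  rw [orderAt_eq_of_eq_div α hnum (mul_ne_zero f.denom_ne_zero g.denom_ne_zero) hrep,
    rootMultiplicity_mul (mul_ne_zero f.denom_ne_zero g.denom_ne_zero)]
  unfold orderAt
  omega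

theorem eq_algebraMap_num_of_orderAt_nonneg [IsAlgClosed K] {f : RatFunc K}
    (h : ∀ α, 0 ≤ orderAt α f) : f = algebraMap K[X] (RatFunc K) f.num := by
  suffices hd : f.denom = 1 by
    conv_lhs => rw [← num_div_denom f, hd, map_one, div_one]
  by_contra hne
  obtain ⟨α, hα⟩ := IsAlgClosed.exists_root f.denom fun h0 =>
    hne ((monic_denom f).natDegree_eq_zero.mp (natDegree_eq_of_degree_eq_some h0))
  have hpos := (rootMultiplicity_pos f.denom_ne_zero).mpr hα
  have := h α
  unfold orderAt at this
  rcases rootMultiplicity_num_eq_zero_or_rootMultiplicity_denom_eq_zero f α with h0 | h0 <;>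
    omega

/-- An additive valuation of `K(x)` trivial on `K`, seen only on nonzero elements. -/
structure IsOrderFunction (v : RatFunc K → ℤ) : Prop where
  map_C : ∀ c : K, c ≠ 0 → v (C c) = 0
  map_mul : ∀ x y : RatFunc K, x ≠ 0 → y ≠ 0 → v (x * y) = v x + v y
  min_le_map_add :
    ∀ x y : RatFunc K, x ≠ 0 → y ≠ 0 → x + y ≠ 0 → min (v x) (v y) ≤ v (x + y)

namespace IsOrderFunction

variable {v : RatFunc K → ℤ} (hv : IsOrderFunction v)
include hv

theorem map_neg {x : RatFunc K} (hx : x ≠ 0) : v (-x) = v x := by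
  have h1 : C (-1 : K) ≠ 0 := by simp
  rw [show -x = C (-1) * x by simp, hv.map_mul _ _ h1 hx,
    hv.map_C _ (neg_ne_zero.mpr one_ne_zero), zero_add]

theorem map_sq {x : RatFunc K} (hx : x ≠ 0) : v (x ^ 2) = 2 * v x := by
  rw [sq, hv.map_mul _ _ hx hx, two_mul]

theorem map_div {x y : RatFunc K} (hx : x ≠ 0) (hy : y ≠ 0) : v (x / y) = v x - v y := by
  have := hv.map_mul _ _ (div_ne_zero hx hy) hy
  rw [div_mul_cancel₀ _ hy] at this
  omega

theorem min_le_of_sub_eq_C {x y : RatFunc K} {c : K} (hx : x ≠ 0) (hy : y ≠ 0) (hc : c ≠ 0)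
    (h : x - y = C c) :
    min (v y) 0 ≤ v x ∧ min (v x) 0 ≤ v y ∧ min (v x) (v y) ≤ 0 := by
  have hC : C c ≠ 0 := by simpa using hc
  refine ⟨?_, ?_, ?_⟩
  · have hxy : x = y + C c := by rw [← h]; ring
    simpa only [← hxy, hv.map_C c hc] using hv.min_le_map_add y (C c) hy hC (hxy ▸ hx)
  · have hyx : y = x + -C c := by rw [← h]; ring
    simpa only [← hyx, hv.map_neg hC, hv.map_C c hc] using
      hv.min_le_map_add x (-C c) hx (neg_ne_zero.mpr hC) (hyx ▸ hy)
  · have hxy : C c = x + -y := by rw [← h]; ring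
    simpa only [← hxy, hv.map_neg hy, hv.map_C c hc] using
      hv.min_le_map_add x (-y) hx (neg_ne_zero.mpr hy) (hxy ▸ hC)

end IsOrderFunction

theorem isOrderFunction_orderAt (α : K) : IsOrderFunction (orderAt α) where
  map_C c _ := orderAt_C α c
  map_mul _ _ := orderAt_mul α
  min_le_map_add _ _ := min_orderAt_le_orderAt_add α

theorem isOrderFunction_neg_intDegree : IsOrderFunction fun f : RatFunc K => -f.intDegree where
  map_C c _ := by rw [intDegree_C, neg_zero]
  map_mul x y hx hy := by rw [intDegree_mul hx hy, neg_add]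
  min_le_map_add x y _ hy hxy := by
    have := intDegree_add_le hy hxy
    omega

theorem deriv'_eq_div (f : RatFunc ℂ) :
    deriv' f = algebraMap ℂ[X] (RatFunc ℂ) (wronskian f.denom f.num) /
      algebraMap ℂ[X] (RatFunc ℂ) (f.denom ^ 2) := by
  rw [deriv', mk_eq_div, wronskian, mul_comm f.denom, mul_comm (derivative f.denom)]

theorem deriv'_eq_div_of_eq_div {f : RatFunc ℂ} {p q : ℂ[X]} (hq : q ≠ 0)
    (h : f = algebraMap ℂ[X] (RatFunc ℂ) p / algebraMap ℂ[X] (RatFunc ℂ) q) :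
    deriv' f = algebraMap ℂ[X] (RatFunc ℂ) (wronskian q p) /
      algebraMap ℂ[X] (RatFunc ℂ) (q ^ 2) := by
  obtain ⟨r, hr⟩ := (denom_dvd hq).mpr ⟨p, h⟩
  have hr0 : r ≠ 0 := by rintro rfl; exact hq (by rw [hr, mul_zero])
  have hp : p = f.num * r := by
    have key := (num_mul_eq_mul_denom_iff hq).mpr h
    rw [hr] at key
    exact mul_left_cancel₀ f.denom_ne_zero (by linear_combination -key)
  have hw : wronskian q p = r ^ 2 * wronskian f.denom f.num := by
    rw [hp, hr, wronskian, wronskian, derivative_mul, derivative_mul]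
    ring
  rw [hw, hr, mul_pow, map_mul, map_mul, mul_comm (algebraMap _ _ (r ^ 2)),
    mul_div_mul_right _ _ (algebraMap_ne_zero (pow_ne_zero 2 hr0)), deriv'_eq_div]

theorem deriv'_sub_C (f : RatFunc ℂ) (c : ℂ) : deriv' (f - C c) = deriv' f := by
  have hrep : f - C c = algebraMap ℂ[X] (RatFunc ℂ) (f.num - Polynomial.C c * f.denom) /
      algebraMap ℂ[X] (RatFunc ℂ) f.denom := by
    rw [map_sub, map_mul, sub_div, num_div_denom, algebraMap_C,
      mul_div_cancel_right₀ _ (algebraMap_ne_zero f.denom_ne_zero)]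
  have hw : wronskian f.denom (f.num - Polynomial.C c * f.denom) = wronskian f.denom f.num := by
    rw [wronskian, wronskian, derivative_sub, derivative_mul, derivative_C]
    ring
  rw [deriv'_eq_div_of_eq_div f.denom_ne_zero hrep, deriv'_eq_div, hw]

theorem wronskian_denom_num_ne_zero {f : RatFunc ℂ} (hd : deriv' f ≠ 0) :
    wronskian f.denom f.num ≠ 0 := fun h0 => hd (by rw [deriv'_eq_div, h0, map_zero, zero_div])

theorem orderAt_sub_one_le_orderAt_deriv' (α : ℂ) {f : RatFunc ℂ} (hd : deriv' f ≠ 0) :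
    orderAt α f - 1 ≤ orderAt α (deriv' f) := by
  have hw := wronskian_denom_num_ne_zero hd
  rw [orderAt_eq_of_eq_div α hw (pow_ne_zero 2 f.denom_ne_zero) (deriv'_eq_div f),
    sq, rootMultiplicity_mul (mul_self_ne_zero.mpr f.denom_ne_zero)]
  have := rootMultiplicity_add_rootMultiplicity_le_wronskian α hw
  unfold orderAt
  omega

theorem orderAt_deriv'_nonneg (α : ℂ) {f : RatFunc ℂ} (hd : deriv' f ≠ 0)
    (hf : 0 ≤ orderAt α f) : 0 ≤ orderAt α (deriv' f) := by
  have hw := wronskian_denom_num_ne_zero hd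
  rw [orderAt_eq_of_eq_div α hw (pow_ne_zero 2 f.denom_ne_zero) (deriv'_eq_div f),
    sq, rootMultiplicity_mul (mul_self_ne_zero.mpr f.denom_ne_zero)]
  unfold orderAt at hf
  rcases rootMultiplicity_num_eq_zero_or_rootMultiplicity_denom_eq_zero f α with h0 | h0 <;>
    omega

theorem intDegree_deriv'_le {f : RatFunc ℂ} (hd : deriv' f ≠ 0) :
    (deriv' f).intDegree ≤ f.intDegree - 1 := by
  have hw := wronskian_denom_num_ne_zero hd
  rw [deriv'_eq_div, intDegree_div (algebraMap_ne_zero hw)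
      (algebraMap_ne_zero (pow_ne_zero 2 f.denom_ne_zero)),
    intDegree_polynomial, intDegree_polynomial, natDegree_pow, intDegree]
  have := natDegree_wronskian_lt_add hw
  omega

end RatFunc

open RatFunc hiding C

structure IsEllipticMorphism (S : ℂ[X]) (κ : ℂ) (F G : RatFunc ℂ) : Prop where
  κ_ne_zero : κ ≠ 0
  κ_ne_one : κ ≠ 1
  ne_C : ∀ c : ℂ, F ≠ RatFunc.C c
  rel : algebraMap ℂ[X] (RatFunc ℂ) S * G ^ 2 = F * (F - 1) * (F - RatFunc.C κ)

namespace IsEllipticMorphism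

variable {S : ℂ[X]} {κ : ℂ} {F G : RatFunc ℂ} (h : IsEllipticMorphism S κ F G)
include h

theorem sub_C_ne_zero (c : ℂ) : F - RatFunc.C c ≠ 0 := sub_ne_zero.mpr (h.ne_C c)

theorem rel_sub_C : algebraMap ℂ[X] (RatFunc ℂ) S * G ^ 2 =
    (F - RatFunc.C 0) * (F - RatFunc.C 1) * (F - RatFunc.C κ) := by
  rw [map_zero, sub_zero, map_one]
  exact h.rel

theorem algebraMap_mul_sq_ne_zero : algebraMap ℂ[X] (RatFunc ℂ) S * G ^ 2 ≠ 0 := by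
  rw [h.rel_sub_C]
  exact mul_ne_zero (mul_ne_zero (h.sub_C_ne_zero 0) (h.sub_C_ne_zero 1)) (h.sub_C_ne_zero κ)

theorem S_ne_zero : S ≠ 0 := by
  rintro rfl
  simpa using h.algebraMap_mul_sq_ne_zero

theorem G_ne_zero : G ≠ 0 := by
  rintro rfl
  simpa using h.algebraMap_mul_sq_ne_zero

theorem order_eq {v : RatFunc ℂ → ℤ} (hv : IsOrderFunction v) :
    v (algebraMap ℂ[X] (RatFunc ℂ) S) + 2 * v G =
      v (F - RatFunc.C 0) + v (F - RatFunc.C 1) + v (F - RatFunc.C κ) := by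
  have := congrArg v h.rel_sub_C
  rwa [hv.map_mul _ _ (algebraMap_ne_zero h.S_ne_zero) (pow_ne_zero 2 h.G_ne_zero),
    hv.map_sq h.G_ne_zero,
    hv.map_mul _ _ (mul_ne_zero (h.sub_C_ne_zero 0) (h.sub_C_ne_zero 1)) (h.sub_C_ne_zero κ),
    hv.map_mul _ _ (h.sub_C_ne_zero 0) (h.sub_C_ne_zero 1)] at this

theorem order_sub_C_constraints {v : RatFunc ℂ → ℤ} (hv : IsOrderFunction v) {a b : ℂ}
    (hab : a ≠ b) :
    min (v (F - RatFunc.C b)) 0 ≤ v (F - RatFunc.C a) ∧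
      min (v (F - RatFunc.C a)) 0 ≤ v (F - RatFunc.C b) ∧
      min (v (F - RatFunc.C a)) (v (F - RatFunc.C b)) ≤ 0 :=
  hv.min_le_of_sub_eq_C (h.sub_C_ne_zero a) (h.sub_C_ne_zero b) (sub_ne_zero.mpr hab.symm)
    (by rw [map_sub]; ring)

theorem orderAt_deriv'_div_nonneg (hsf : Squarefree S) (hd : deriv' F ≠ 0) (α : ℂ) :
    0 ≤ orderAt α (deriv' F / G) := by
  have hv := isOrderFunction_orderAt α
  have hS : S.rootMultiplicity α ≤ 1 :=
    rootMultiplicity_le_one_of_separable (PerfectField.separable_iff_squarefree.mpr hsf) α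
  have hd' (c : ℂ) : deriv' (F - RatFunc.C c) ≠ 0 := by rwa [deriv'_sub_C]
  have hderiv (c : ℂ) : orderAt α (F - RatFunc.C c) - 1 ≤ orderAt α (deriv' F) := by
    simpa only [deriv'_sub_C] using orderAt_sub_one_le_orderAt_deriv' α (hd' c)
  have hpos : 0 ≤ orderAt α (F - RatFunc.C 0) → 0 ≤ orderAt α (deriv' F) := by
    simpa only [deriv'_sub_C] using orderAt_deriv'_nonneg α (hd' 0)
  have heq := h.order_eq hv
  rw [orderAt_algebraMap] at heq
  have h01 := h.order_sub_C_constraints hv zero_ne_one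
  have h0κ := h.order_sub_C_constraints hv h.κ_ne_zero.symm
  have h1κ := h.order_sub_C_constraints hv h.κ_ne_one.symm
  have := hderiv 0
  have := hderiv 1
  have := hderiv κ
  rw [hv.map_div hd h.G_ne_zero]
  -- parity of `v S + 2 v G` rules out a simple pole of `F`, or a simple zero of one of the
  -- factors, at a point where `S` does not vanish
  omega

theorem intDegree_deriv'_div_le {g : ℕ} (hdeg : S.natDegree = 2 * g + 1) (hd : deriv' F ≠ 0) :
    (deriv' F / G).intDegree ≤ g - 1 := by
  have hv := isOrderFunction_neg_intDegree (K := ℂ)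
  have hderiv (c : ℂ) : (deriv' F).intDegree ≤ (F - RatFunc.C c).intDegree - 1 := by
    simpa only [deriv'_sub_C] using
      intDegree_deriv'_le (f := F - RatFunc.C c) (by rwa [deriv'_sub_C])
  have heq := h.order_eq hv
  have h01 := h.order_sub_C_constraints hv zero_ne_one
  have h0κ := h.order_sub_C_constraints hv h.κ_ne_zero.symm
  have h1κ := h.order_sub_C_constraints hv h.κ_ne_one.symm
  simp only [intDegree_polynomial, hdeg] at heq h01 h0κ h1κ
  have := hderiv 0
  have := hderiv 1
  have := hderiv κ
  rw [intDegree_div hd h.G_ne_zero]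
  omega

end IsEllipticMorphism

theorem stmt0_general (g : ℕ) (S : Polynomial ℂ)
    (hsf : Squarefree S) (hdeg : S.natDegree = 2 * g + 1)
    (κ : ℂ) (hκ0 : κ ≠ 0) (hκ1 : κ ≠ 1)
    (F G : RatFunc ℂ) (hFnc : ∀ c : ℂ, F ≠ RatFunc.C c)
    (hrel : (algebraMap (Polynomial ℂ) (RatFunc ℂ) S) * G ^ 2
      = F * (F - 1) * (F - RatFunc.C κ)) :
    ∃ p : Polynomial ℂ, p.degree ≤ (g - 1 : ℕ) ∧
      RatFunc.deriv' F / G = algebraMap (Polynomial ℂ) (RatFunc ℂ) p := by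
  have h : IsEllipticMorphism S κ F G := ⟨hκ0, hκ1, hFnc, hrel⟩
  by_cases hd : deriv' F = 0
  · exact ⟨0, by simp, by rw [hd, zero_div, map_zero]⟩
  have hpoly := eq_algebraMap_num_of_orderAt_nonneg (h.orderAt_deriv'_div_nonneg hsf hd)
  refine ⟨_, natDegree_le_iff_degree_le.mp ?_, hpoly⟩
  have := h.intDegree_deriv'_div_le hdeg hd
  rw [hpoly, intDegree_polynomial] at this
  omega

theorem stmt0 (g : ℕ) (hg : 1 ≤ g) (S : Polynomial ℂ) (hmonic : S.Monic)
    (hsf : Squarefree S) (hdeg : S.natDegree = 2 * g + 1)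
    (κ : ℂ) (hκ0 : κ ≠ 0) (hκ1 : κ ≠ 1)
    (F G : RatFunc ℂ) (hFnc : ∀ c : ℂ, F ≠ RatFunc.C c)
    (hrel : (algebraMap (Polynomial ℂ) (RatFunc ℂ) S) * G ^ 2
      = F * (F - 1) * (F - RatFunc.C κ)) :
    ∃ p : Polynomial ℂ, p.degree ≤ (g - 1 : ℕ) ∧
      RatFunc.deriv' F / G = algebraMap (Polynomial ℂ) (RatFunc ℂ) p :=
  stmt0_general g S hsf hdeg κ hκ0 hκ1 F G hFnc hrel
end

section
/- Let κ ∈ ℂ with κ ≠ 0 and κ ≠ 1. There do not exist rational functions f, g ∈ ℂ(x) with f nonconstant such that g² = f·(f−1)·(f−κ). (Equivalently, the elliptic curve v² = u(u−1)(u−κ) admits no nonconstant rational parametrization.) -/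
/-!
Write `f = p / q` in lowest terms. Then `(g q²)² = p q (p - q) (p - κ q)`, so `g q²` is a
polynomial (`k[X]` is integrally closed), and as the four factors are pairwise coprime, each of
them is a square. With `p = s²`, `q = t²` and `μ² = κ`, the factorizations `p - q = (s - t)(s + t)`
and `p - κ q = (s - μ t)(s + μ t)` into coprime factors make `s ∓ t` and `s ∓ μ t` squares, and a
linear change of variables puts them back in the same shape, with a new parameter and half the
degree. By infinite descent, `p` and `q` are constant.
-/

open Polynomial

section Squares

variable {k : Type*} [Field k]

theorem IsCoprime.sub_C_mul_sub_C_mul {p q : k[X]} (h : IsCoprime p q) {a b : k} (hab : a ≠ b) :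
    IsCoprime (p - C a * q) (p - C b * q) := by
  have hunit : IsUnit (C (a - b)) := isUnit_C.mpr (sub_ne_zero.mpr hab).isUnit
  have h' : IsCoprime (p - C a * q) (C (a - b) * q) :=
    (isCoprime_mul_unit_left_right hunit _ _).mpr (IsCoprime.sub_mul_right_left_iff.mpr h)
  rw [show p - C b * q = C (a - b) * q + (p - C a * q) * 1 by rw [map_sub]; ring]
  exact h'.add_mul_left_right 1

theorem IsCoprime.sub_C_mul_add_C_mul [NeZero (2 : k)] {s t : k[X]} (h : IsCoprime s t) {c : k}
    (hc : c ≠ 0) : IsCoprime (s - C c * t) (s + C c * t) := by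
  have hc' : c ≠ -c := fun h' ↦ hc (by simpa [two_ne_zero] using (by linear_combination h' :
    (2 : k) * c = 0))
  simpa using h.sub_C_mul_sub_C_mul hc'

theorem Polynomial.max_natDegree_sub_add [NeZero (2 : k)] (s t : k[X]) :
    max (s - t).natDegree (s + t).natDegree = max s.natDegree t.natDegree := by
  refine le_antisymm (max_le (natDegree_sub_le s t) (natDegree_add_le s t)) (max_le ?_ ?_)
  · rw [← natDegree_C_mul (two_ne_zero (α := k)),
      show C 2 * s = (s - t) + (s + t) by rw [map_ofNat]; ring]
    exact natDegree_add_le _ _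
  · rw [← natDegree_C_mul (two_ne_zero (α := k)),
      show C 2 * t = (s + t) - (s - t) by rw [map_ofNat]; ring]
    exact (natDegree_sub_le _ _).trans (max_comm _ _).le

variable [IsAlgClosed k]

theorem Polynomial.IsSquare.C_mul {p : k[X]} (hp : IsSquare p) (c : k) : IsSquare (C c * p) := by
  obtain ⟨s, rfl⟩ := hp
  obtain ⟨e, rfl⟩ := IsAlgClosed.exists_eq_mul_self c
  exact ⟨C e * s, by rw [map_mul]; ring⟩

theorem Polynomial.isSquare_mul_iff_of_isCoprime {x y : k[X]} (h : IsCoprime x y) :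
    IsSquare (x * y) ↔ IsSquare x ∧ IsSquare y := by
  have key : ∀ {x y : k[X]}, IsCoprime x y → IsSquare (x * y) → IsSquare x := by
    rintro x y h ⟨c, hc⟩
    obtain ⟨d, u, hu⟩ := exists_associated_pow_of_mul_eq_pow' h (hc.trans (sq c).symm)
    obtain ⟨r, -, hr⟩ := isUnit_iff.mp u.isUnit
    rw [← hu, ← hr, mul_comm]
    exact (IsSquare.sq d).C_mul r
  exact ⟨fun hxy ↦ ⟨key h hxy, key h.symm (mul_comm x y ▸ hxy)⟩, fun ⟨hx, hy⟩ ↦ hx.mul hy⟩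

end Squares

section Descent

variable {k : Type*} [Field k]

/-- The shape of a point `x = p / q` (in lowest terms) of `y² = x (x - 1) (x - κ)` over `k(X)`. -/
structure LegendreSquares (κ : k) (p q : k[X]) : Prop where
  ne_zero : κ ≠ 0
  ne_one : κ ≠ 1
  isCoprime : IsCoprime p q
  isSquare_left : IsSquare p
  isSquare_right : IsSquare q
  isSquare_sub : IsSquare (p - q)
  isSquare_sub_C_mul : IsSquare (p - C κ * q)

variable [IsAlgClosed k] [NeZero (2 : k)]

-- As a function of `s / t`, the ratio of the new pair sends the zeros `1, -1, μ, -μ` of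
-- `s ∓ t`, `s ∓ μ t` to `0, ∞, 1, r * r`: this is where `r = (1 + μ) / (μ - 1)` comes from.
theorem LegendreSquares.of_isSquare_sub_add {s t : k[X]} (hst : IsCoprime s t) {μ r : k}
    (hμ0 : μ ≠ 0) (hμ1 : μ - 1 ≠ 0) (hμ1' : 1 + μ ≠ 0) (hr : (μ - 1) * r = 1 + μ)
    (hsub : IsSquare (s - t)) (hadd : IsSquare (s + t)) (hsubμ : IsSquare (s - C μ * t))
    (haddμ : IsSquare (s + C μ * t)) :
    LegendreSquares (r * r) (C (1 + μ) * (s - t)) (C (μ - 1) * (s + t)) := by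
  have hr0 : r ≠ 0 := by rintro rfl; exact hμ1' (by rw [← hr, mul_zero])
  have hrC : (C μ - 1) * C r = 1 + C μ := by simpa using congrArg C hr
  refine ⟨mul_ne_zero hr0 hr0, fun hr1 ↦ ?_, ?_, hsub.C_mul _, hadd.C_mul _, ?_, ?_⟩
  · have h4μ : (2 : k) * (2 * μ) = 0 := by
      linear_combination (-(1 + μ + (μ - 1) * r)) * hr + (μ - 1) ^ 2 * hr1
    exact hμ0 (by simpa [two_ne_zero] using h4μ)
  · exact (isCoprime_mul_units_left (isUnit_C.mpr hμ1'.isUnit) (isUnit_C.mpr hμ1.isUnit) _ _).mpr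
      (by simpa using hst.sub_C_mul_add_C_mul one_ne_zero)
  · rw [show C (1 + μ) * (s - t) - C (μ - 1) * (s + t) = C 2 * (s - C μ * t) by
      simp only [map_add, map_sub, map_one, map_ofNat]; ring]
    exact hsubμ.C_mul 2
  · rw [show C (1 + μ) * (s - t) - C (r * r) * (C (μ - 1) * (s + t)) =
        C (-2 * r) * (s + C μ * t) by
      simp only [map_add, map_sub, map_one, map_mul, map_neg, map_ofNat]
      linear_combination (-(s - t) - C r * (s + t)) * hrC]
    exact haddμ.C_mul _

theorem LegendreSquares.exists_half {κ : k} {p q : k[X]} (h : LegendreSquares κ p q) :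
    ∃ (κ' : k) (P Q : k[X]), LegendreSquares κ' P Q ∧
      max p.natDegree q.natDegree = 2 * max P.natDegree Q.natDegree := by
  obtain ⟨s, rfl⟩ := h.isSquare_left
  obtain ⟨t, rfl⟩ := h.isSquare_right
  obtain ⟨μ, rfl⟩ := IsAlgClosed.exists_eq_mul_self κ
  have hμ0 : μ ≠ 0 := by rintro rfl; exact h.ne_zero (mul_zero 0)
  have hμ1 : μ - 1 ≠ 0 := fun hμ ↦ h.ne_one (by rw [sub_eq_zero.mp hμ, mul_one])
  have hμ1' : 1 + μ ≠ 0 := fun hμ ↦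
    h.ne_one (by rw [eq_neg_of_add_eq_zero_right hμ, neg_mul_neg, mul_one])
  have hst : IsCoprime s t := h.isCoprime.of_mul_left_left.of_mul_right_left
  obtain ⟨hsub, hadd⟩ := (isSquare_mul_iff_of_isCoprime
    (by simpa using hst.sub_C_mul_add_C_mul one_ne_zero)).mp
    (by convert h.isSquare_sub using 1; ring)
  obtain ⟨hsubμ, haddμ⟩ := (isSquare_mul_iff_of_isCoprime (hst.sub_C_mul_add_C_mul hμ0)).mp
    (by convert h.isSquare_sub_C_mul using 1; rw [map_mul]; ring)
  obtain ⟨r, hr⟩ : ∃ r, (μ - 1) * r = 1 + μ := ⟨_, mul_div_cancel₀ _ hμ1⟩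
  refine ⟨r * r, _, _, .of_isSquare_sub_add hst hμ0 hμ1 hμ1' hr hsub hadd hsubμ haddμ, ?_⟩
  rw [natDegree_C_mul hμ1', natDegree_C_mul hμ1, max_natDegree_sub_add, ← sq, ← sq,
    natDegree_pow, natDegree_pow, Nat.mul_max_mul_left]

theorem LegendreSquares.natDegree_eq_zero {κ : k} {p q : k[X]} (h : LegendreSquares κ p q) :
    max p.natDegree q.natDegree = 0 := by
  induction hn : max p.natDegree q.natDegree using Nat.strong_induction_on
    generalizing κ p q with
  | _ n ih =>
  obtain ⟨_, P, Q, h', hdeg⟩ := h.exists_half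
  by_contra hn0
  have := ih _ (by omega) h' rfl
  omega

end Descent

namespace RatFunc

variable {k : Type*} [Field k]

theorem exists_sq_eq_num_mul_denom_mul {κ : k} {f g : RatFunc k}
    (h : g ^ 2 = f * (f - 1) * (f - C κ)) :
    ∃ w : k[X],
      w ^ 2 = f.num * f.denom * ((f.num - f.denom) * (f.num - Polynomial.C κ * f.denom)) := by
  have hf : f * algebraMap k[X] (RatFunc k) f.denom = algebraMap k[X] (RatFunc k) f.num :=
    (eq_div_iff (algebraMap_ne_zero f.denom_ne_zero)).mp f.num_div_denom.symm
  have hsq : (g * algebraMap k[X] (RatFunc k) f.denom ^ 2) ^ 2 = algebraMap k[X] (RatFunc k)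
      (f.num * f.denom * ((f.num - f.denom) * (f.num - Polynomial.C κ * f.denom))) := by
    simp only [map_mul, map_sub, algebraMap_C, ← hf]
    linear_combination (algebraMap k[X] (RatFunc k) f.denom) ^ 4 * h
  obtain ⟨w, hw⟩ := IsIntegrallyClosed.exists_algebraMap_eq_of_isIntegral_pow two_pos
    (hsq ▸ isIntegral_algebraMap)
  exact ⟨w, IsFractionRing.injective k[X] (RatFunc k) (by rw [map_pow, hw, hsq])⟩

variable [IsAlgClosed k]

theorem legendreSquares_num_denom {κ : k} (hκ0 : κ ≠ 0) (hκ1 : κ ≠ 1) {f g : RatFunc k}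
    (h : g ^ 2 = f * (f - 1) * (f - C κ)) : LegendreSquares κ f.num f.denom := by
  obtain ⟨w, hw⟩ := exists_sq_eq_num_mul_denom_mul h
  set p := f.num
  set q := f.denom
  have hpq : IsCoprime p q := f.isCoprime_num_denom
  have hp₁ : IsCoprime p (p - q) := by simpa using hpq.sub_C_mul_sub_C_mul zero_ne_one
  have hpκ : IsCoprime p (p - Polynomial.C κ * q) := by
    simpa using hpq.sub_C_mul_sub_C_mul hκ0.symm
  have h₁κ : IsCoprime (p - q) (p - Polynomial.C κ * q) := by
    simpa using hpq.sub_C_mul_sub_C_mul hκ1.symm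
  have hq₁ : IsCoprime q (p - q) := by
    simpa using (IsCoprime.sub_mul_left_left_iff (z := 1).mpr hpq).symm
  have hqκ : IsCoprime q (p - Polynomial.C κ * q) :=
    (IsCoprime.sub_mul_right_left_iff.mpr hpq).symm
  obtain ⟨hpq', h₁κ'⟩ := (isSquare_mul_iff_of_isCoprime
    ((hp₁.mul_right hpκ).mul_left (hq₁.mul_right hqκ))).mp ⟨w, (sq w ▸ hw).symm⟩
  obtain ⟨hp, hq⟩ := (isSquare_mul_iff_of_isCoprime hpq).mp hpq'
  obtain ⟨h₁, hκ⟩ := (isSquare_mul_iff_of_isCoprime h₁κ).mp h₁κ'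
  exact ⟨hκ0, hκ1, hpq, hp, hq, h₁, hκ⟩

variable [NeZero (2 : k)]

theorem exists_eq_C_of_sq_eq {κ : k} (hκ0 : κ ≠ 0) (hκ1 : κ ≠ 1) {f g : RatFunc k}
    (h : g ^ 2 = f * (f - 1) * (f - C κ)) : ∃ c, f = C c := by
  have hdeg := (legendreSquares_num_denom hκ0 hκ1 h).natDegree_eq_zero
  have hq : f.denom = 1 := f.monic_denom.natDegree_eq_zero.mp (by omega)
  obtain ⟨c, hc⟩ := natDegree_eq_zero.mp (by omega : f.num.natDegree = 0)
  exact ⟨c, by rw [← f.num_div_denom, hq, ← hc, map_one, div_one, algebraMap_C]⟩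

end RatFunc

theorem stmt1 (κ : ℂ) (hκ0 : κ ≠ 0) (hκ1 : κ ≠ 1) :
    ¬ ∃ f g : RatFunc ℂ, (∀ c : ℂ, f ≠ RatFunc.C c) ∧
      g ^ 2 = f * (f - 1) * (f - RatFunc.C κ) := by
  rintro ⟨f, g, hf, h⟩
  obtain ⟨c, rfl⟩ := RatFunc.exists_eq_C_of_sq_eq hκ0 hκ1 h
  exact hf c rfl
end

section
/- Let S ∈ ℂ[x] be a monic squarefree polynomial of odd degree 2g+1 with g ≥ 1, let κ ∈ ℂ with κ ≠ 0, κ ≠ 1, let R₁, R₂, R₃, R₄ be a partition of the set of roots of S into four (possibly empty) subsets, and let A, B, C, D ∈ ℂ[x] and coprime U, V ∈ ℂ[x] satisfy U = A²·∏_{α∈R₁}(x−α), V = B²·∏_{α∈R₂}(x−α), U−V = C²·∏_{α∈R₃}(x−α), U−κV = D²·∏_{α∈R₄}(x−α), with F := U/V nonconstant. Then G := A·B·C·D/V² satisfies S·G² = F·(F−1)·(F−κ), i.e. (κ, F, G) is an elliptic morphism for S. -/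
/-!
Multiplying the four factorizations gives `U (U - V) (U - κV) V = S (A B C' D)²`, because the
`R_i` partition the roots of the monic squarefree `S`, whose product of linear factors is `S`.
Dividing by `V⁴` is the claimed relation for `F = U / V`.
-/

open Polynomial

theorem Polynomial.Monic.prod_X_sub_C_roots_toFinset_of_squarefree {K : Type*} [Field K]
    [IsAlgClosed K] [DecidableEq K] {S : K[X]} (hmonic : S.Monic) (hsf : Squarefree S) :
    ∏ α ∈ S.roots.toFinset, (X - C α) = S := by
  have hnodup : S.roots.Nodup := nodup_roots (PerfectField.separable_iff_squarefree.mpr hsf)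
  rw [Finset.prod_eq_multiset_prod, Multiset.toFinset_val, Multiset.dedup_eq_self.mpr hnodup]
  exact prod_multiset_X_sub_C_of_monic_of_roots_card_eq hmonic IsAlgClosed.card_roots_eq_natDegree

theorem div_mul_div_sub_one_mul_div_sub_eq {L : Type*} [Field L] {s u v w κ : L}
    (h : u * (u - v) * (u - κ * v) * v = s * w ^ 2) :
    s * (w / v ^ 2) ^ 2 = u / v * (u / v - 1) * (u / v - κ) := by
  rcases eq_or_ne v 0 with rfl | hv
  · simp -- both sides vanish, as `x / 0 = 0`
  field_simp
  linear_combination -h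

theorem stmt7_general (S : Polynomial ℂ) (hmonic : S.Monic)
    (hsf : Squarefree S)
    (κ : ℂ)
    (R₁ R₂ R₃ R₄ : Finset ℂ)
    (hcover : R₁ ∪ R₂ ∪ R₃ ∪ R₄ = S.roots.toFinset)
    (h12 : Disjoint R₁ R₂) (h13 : Disjoint R₁ R₃) (h14 : Disjoint R₁ R₄)
    (h23 : Disjoint R₂ R₃) (h24 : Disjoint R₂ R₄) (h34 : Disjoint R₃ R₄)
    (A B C' D U V : Polynomial ℂ)
    (hU : U = A ^ 2 * ∏ α ∈ R₁, (X - C α))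
    (hV : V = B ^ 2 * ∏ α ∈ R₂, (X - C α))
    (hUmV : U - V = C' ^ 2 * ∏ α ∈ R₃, (X - C α))
    (hUmκV : U - C κ * V = D ^ 2 * ∏ α ∈ R₄, (X - C α))
    (F : RatFunc ℂ)
    (hF : F = (algebraMap (Polynomial ℂ) (RatFunc ℂ) U)
        / (algebraMap (Polynomial ℂ) (RatFunc ℂ) V))
    (G : RatFunc ℂ)
    (hG : G = (algebraMap (Polynomial ℂ) (RatFunc ℂ) (A * B * C' * D))
        / (algebraMap (Polynomial ℂ) (RatFunc ℂ) (V ^ 2))) :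
    (algebraMap (Polynomial ℂ) (RatFunc ℂ) S) * G ^ 2
      = F * (F - 1) * (F - RatFunc.C κ) := by
  have hS : ∏ α ∈ R₁ ∪ R₂ ∪ R₃ ∪ R₄, (X - C α) = S := by
    rw [hcover, hmonic.prod_X_sub_C_roots_toFinset_of_squarefree hsf]
  have key : U * (U - V) * (U - C κ * V) * V = S * (A * B * C' * D) ^ 2 := by
    rw [← hS,
      Finset.prod_union (Finset.disjoint_union_left.2
        ⟨Finset.disjoint_union_left.2 ⟨h14, h24⟩, h34⟩),
      Finset.prod_union (Finset.disjoint_union_left.2 ⟨h13, h23⟩),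
      Finset.prod_union h12, hUmV, hUmκV, hU, hV]
    ring
  rw [hF, hG, map_pow, ← RatFunc.algebraMap_C]
  refine div_mul_div_sub_one_mul_div_sub_eq ?_
  simpa only [map_mul, map_sub, map_pow] using congrArg (algebraMap ℂ[X] (RatFunc ℂ)) key

theorem stmt7 (g : ℕ) (hg : 1 ≤ g) (S : Polynomial ℂ) (hmonic : S.Monic)
    (hsf : Squarefree S) (hdeg : S.natDegree = 2 * g + 1)
    (κ : ℂ) (hκ0 : κ ≠ 0) (hκ1 : κ ≠ 1)
    (R₁ R₂ R₃ R₄ : Finset ℂ)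
    (hcover : R₁ ∪ R₂ ∪ R₃ ∪ R₄ = S.roots.toFinset)
    (h12 : Disjoint R₁ R₂) (h13 : Disjoint R₁ R₃) (h14 : Disjoint R₁ R₄)
    (h23 : Disjoint R₂ R₃) (h24 : Disjoint R₂ R₄) (h34 : Disjoint R₃ R₄)
    (A B C' D U V : Polynomial ℂ) (hUV : IsCoprime U V)
    (hU : U = A ^ 2 * ∏ α ∈ R₁, (X - C α))
    (hV : V = B ^ 2 * ∏ α ∈ R₂, (X - C α))
    (hUmV : U - V = C' ^ 2 * ∏ α ∈ R₃, (X - C α))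
    (hUmκV : U - C κ * V = D ^ 2 * ∏ α ∈ R₄, (X - C α))
    (F : RatFunc ℂ)
    (hF : F = (algebraMap (Polynomial ℂ) (RatFunc ℂ) U)
        / (algebraMap (Polynomial ℂ) (RatFunc ℂ) V))
    (hFnc : ∀ c : ℂ, F ≠ RatFunc.C c)
    (G : RatFunc ℂ)
    (hG : G = (algebraMap (Polynomial ℂ) (RatFunc ℂ) (A * B * C' * D))
        / (algebraMap (Polynomial ℂ) (RatFunc ℂ) (V ^ 2))) :
    (algebraMap (Polynomial ℂ) (RatFunc ℂ) S) * G ^ 2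
      = F * (F - 1) * (F - RatFunc.C κ) :=
  stmt7_general S hmonic hsf κ R₁ R₂ R₃ R₄ hcover h12 h13 h14 h23 h24 h34 A B C' D U V hU hV hUmV
    hUmκV F hF G hG
end

section
/- Let S = 4x⁵ − 10x⁴ − 4x³ + 9x² + 6x + 1 ∈ ℚ[x]. Then the following two identities hold in the field ℚ(x): with F₁ = x²/(2x+1), one has S·x²/(2(2x+1)⁴) = F₁·(F₁−1)·(F₁−1/2); and with F₂ = (x+1)²/(4x+2), one has S·(x+1)²/(16(2x+1)⁴) = F₂·(F₂−1)·(F₂−3/4). In particular, (1/2, F₁, G₁) with G₁² = x²/(2(2x+1)⁴) and (3/4, F₂, G₂) with G₂ = (x+1)/(4(2x+1)²) define two elliptic morphisms for the genus-2 hyperelliptic curve y² = S(x). -/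
/-!
Both identities are polynomial identities after clearing the denominator `2x + 1`, so they
hold over any field of characteristic zero. `F₁` and `F₂` are nonconstant because their
degrees `2 - 1 = 1` as rational functions are nonzero.
-/

open Polynomial

section Identities

variable {K : Type*} [Field K] [CharZero K] {x : K}

theorem quintic_mul_sq_eq_cubic_one_half (hx : 2 * x + 1 ≠ 0) :
    (4 * x ^ 5 - 10 * x ^ 4 - 4 * x ^ 3 + 9 * x ^ 2 + 6 * x + 1) * x ^ 2 / (2 * (2 * x + 1) ^ 4) =
      x ^ 2 / (2 * x + 1) * (x ^ 2 / (2 * x + 1) - 1) * (x ^ 2 / (2 * x + 1) - 1 / 2) := by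
  -- `field_simp` normalizes the denominator to `x * 2 + 1`
  rw [mul_comm] at hx
  field_simp
  ring

theorem quintic_mul_sq_eq_cubic_three_quarters (hx : 2 * x + 1 ≠ 0) :
    (4 * x ^ 5 - 10 * x ^ 4 - 4 * x ^ 3 + 9 * x ^ 2 + 6 * x + 1) *
        ((x + 1) / (4 * (2 * x + 1) ^ 2)) ^ 2 =
      (x + 1) ^ 2 / (4 * x + 2) * ((x + 1) ^ 2 / (4 * x + 2) - 1) *
        ((x + 1) ^ 2 / (4 * x + 2) - 3 / 4) := by
  rw [show 4 * x + 2 = 2 * (x * 2 + 1) by ring]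
  rw [mul_comm] at hx
  field_simp
  ring

end Identities

theorem RatFunc.algebraMap_div_ne_C_of_natDegree_ne {K : Type*} [Field K] {p q : K[X]}
    (hp : p ≠ 0) (hq : q ≠ 0) (hpq : p.natDegree ≠ q.natDegree) (c : K) :
    algebraMap K[X] (RatFunc K) p / algebraMap K[X] (RatFunc K) q ≠ RatFunc.C c := by
  intro h
  have hdeg := congrArg RatFunc.intDegree h
  rw [RatFunc.intDegree_div (RatFunc.algebraMap_ne_zero hp) (RatFunc.algebraMap_ne_zero hq),
    RatFunc.intDegree_polynomial, RatFunc.intDegree_polynomial, RatFunc.intDegree_C] at hdeg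
  omega

theorem stmt17 (x S F₁ F₂ G₂ : RatFunc ℚ) (hx : x = RatFunc.X)
    (hS : S = 4 * x ^ 5 - 10 * x ^ 4 - 4 * x ^ 3 + 9 * x ^ 2 + 6 * x + 1)
    (hF₁ : F₁ = x ^ 2 / (2 * x + 1))
    (hF₂ : F₂ = (x + 1) ^ 2 / (4 * x + 2))
    (hG₂ : G₂ = (x + 1) / (4 * (2 * x + 1) ^ 2)) :
    S * x ^ 2 / (2 * (2 * x + 1) ^ 4) = F₁ * (F₁ - 1) * (F₁ - 1 / 2) ∧
    S * (x + 1) ^ 2 / (16 * (2 * x + 1) ^ 4) = F₂ * (F₂ - 1) * (F₂ - 3 / 4) ∧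
    S * G₂ ^ 2 = F₂ * (F₂ - 1) * (F₂ - 3 / 4) ∧
    (∀ c : ℚ, F₁ ≠ RatFunc.C c) ∧ (∀ c : ℚ, F₂ ≠ RatFunc.C c) := by
  subst hx hS hF₁ hF₂ hG₂
  have hdeg₁ : (2 * X + 1 : ℚ[X]).natDegree = 1 := by compute_degree!
  have hdeg₂ : (4 * X + 2 : ℚ[X]).natDegree = 1 := by compute_degree!
  have hdeg₃ : ((X + 1) ^ 2 : ℚ[X]).natDegree = 2 := by compute_degree!
  have hne₁ : (2 * X + 1 : ℚ[X]) ≠ 0 := ne_zero_of_natDegree_gt (n := 0) (by omega)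
  have hne₂ : (4 * X + 2 : ℚ[X]) ≠ 0 := ne_zero_of_natDegree_gt (n := 0) (by omega)
  have hne₃ : ((X + 1) ^ 2 : ℚ[X]) ≠ 0 := ne_zero_of_natDegree_gt (n := 0) (by omega)
  have hden : (2 * RatFunc.X + 1 : RatFunc ℚ) ≠ 0 := by
    simpa only [map_add, map_mul, map_one, map_ofNat, RatFunc.algebraMap_X] using
      RatFunc.algebraMap_ne_zero hne₁
  have h34 := quintic_mul_sq_eq_cubic_three_quarters hden
  refine ⟨quintic_mul_sq_eq_cubic_one_half hden,
    by rw [← h34, div_pow, mul_div_assoc]; ring, h34, fun c => ?_, fun c => ?_⟩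
  · simpa only [map_add, map_mul, map_one, map_pow, map_ofNat, RatFunc.algebraMap_X] using
      RatFunc.algebraMap_div_ne_C_of_natDegree_ne (pow_ne_zero 2 X_ne_zero) hne₁
        (by rw [natDegree_X_pow, hdeg₁]; decide) c
  · simpa only [map_add, map_mul, map_one, map_pow, map_ofNat, RatFunc.algebraMap_X] using
      RatFunc.algebraMap_div_ne_C_of_natDegree_ne hne₃ hne₂ (by rw [hdeg₃, hdeg₂]; decide) c
end
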